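/- Let u(·,y) ∈ H_0^1(D) solve the weak elliptic problem ∫_D a(x,y)∇u(x,y)·∇v(x)dx = ⟨f,v⟩ for all v ∈ H_0^1(D), with affine coefficient a(x,y) = a_0(x) + Σ_{j≥1} y_j ψ_j(x), y ∈ [−1,1]^ℕ, satisfying 0 < a_min ≤ a(x,y) ≤ a_max uniformly, where b_j := ‖ψ_j‖_{L^∞(D)} satisfies the standard regularity bound ‖∂^ν u(·,y)‖_{H_0^1} ≤ (‖f‖_{H^{−1}}/a_min^{|ν|+1}) |ν|! ∏_j b_j^{ν_j}. Let G_nl(v) = ∫_D v(x)² dx. Then for every finitely supported multi-index ν and every y ∈ [−1,1]^ℕ, |∂^ν G_nl(u(·,y))| ≤ (C_P² ‖f‖²_{H^{−1}} / a_min^{|ν|+2}) (|ν|+1)! ∏_j b_j^{ν_j}, where C_P is the Poincaré constant of the embedding H_0^1(D) ↪ L²(D). -/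

import Mathlib

/-!
`G_nl(u(y)) = B(u(y), u(y))` for the `L²` pairing `B(v, w) = ∫ v w`, which by Cauchy–Schwarz and
the Poincaré inequality is a bounded bilinear form on `X` with `‖B‖ ≤ C_P²`. By the Leibniz rule,
`∂^ν B(u, u) = Σ_{m ≤ ν} (ν choose m) B(∂^m u, ∂^{ν-m} u)`. Bounding each term by the regularity
estimate, the powers of `a_min` and the weights `∏ b_j^{ν_j}` of `m` and `ν - m` combine to those
of `ν`, and what remains is `Σ_{m ≤ ν} (ν choose m) |m|! (|ν| - |m|)! = (|ν| + 1)!`.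
-/

open MeasureTheory

/-- `Dg` is the family of all mixed partial derivatives (in the parametric variables)
of `g`: `Dg 0 = g`, and differentiating `Dg ν` in the `j`-th coordinate yields
`Dg (ν + e_j)`. -/
def IsPDerivFamily {X : Type*} [NormedAddCommGroup X] [NormedSpace ℝ X]
    (g : (ℕ → ℝ) → X) (Dg : (ℕ →₀ ℕ) → (ℕ → ℝ) → X) : Prop :=
  Dg 0 = g ∧
    ∀ (ν : ℕ →₀ ℕ) (j : ℕ) (y : ℕ → ℝ),
      HasDerivAt (fun t => Dg ν (Function.update y j t))
        (Dg (ν + Finsupp.single j 1) y) (y j)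

theorem Multiset.toFinsupp_cons {α : Type*} [DecidableEq α] (a : α) (s : Multiset α) :
    toFinsupp (a ::ₘ s) = toFinsupp s + Finsupp.single a 1 := by
  rw [← singleton_add, toFinsupp_add, toFinsupp_singleton, add_comm]

theorem Finsupp.toMultiset_add_single {α : Type*} (ν : α →₀ ℕ) (a : α) :
    toMultiset (ν + single a 1) = a ::ₘ toMultiset ν := by
  rw [toMultiset_add, toMultiset_single, one_nsmul, add_comm, Multiset.singleton_add]

theorem Multiset.sum_antidiagonal_factorial_mul_factorial {α : Type*} (s : Multiset α) :
    (s.antidiagonal.map fun p => (card p.1).factorial * (card p.2).factorial).sum =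
      (card s + 1).factorial := by
  induction s using Multiset.induction_on with
  | empty => simp
  | cons a s ih =>
    have hterm : ∀ p ∈ s.antidiagonal,
        (card p.1).factorial * (card p.2 + 1).factorial +
          (card p.1 + 1).factorial * (card p.2).factorial =
        (card s + 2) * ((card p.1).factorial * (card p.2).factorial) := by
      intro p hp
      rw [← mem_antidiagonal.mp hp, card_add, Nat.factorial_succ, Nat.factorial_succ]
      ring
    rw [antidiagonal_cons, map_add, sum_add, map_map, map_map, ← sum_map_add]
    simp only [Function.comp_def, Prod.map_fst, Prod.map_snd, id, card_cons]
    rw [map_congr rfl hterm, sum_map_mul_left, ih, Nat.factorial_succ (card s + 1)]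

theorem hasDerivAt_multiset_sum {ι E : Type*} [NormedAddCommGroup E] [NormedSpace ℝ E]
    {s : Multiset ι} {F : ι → ℝ → E} {F' : ι → E} {x : ℝ}
    (h : ∀ i ∈ s, HasDerivAt (F i) (F' i) x) :
    HasDerivAt (fun t => (s.map fun i => F i t).sum) (s.map F').sum x := by
  induction s using Multiset.induction_on with
  | empty => simpa using hasDerivAt_const x (0 : E)
  | cons a s ih =>
    simp only [Multiset.map_cons, Multiset.sum_cons]
    exact (h a (Multiset.mem_cons_self a s)).add
      (ih fun i hi => h i (Multiset.mem_cons_of_mem hi))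

theorem IsPDerivFamily.unique {X : Type*} [NormedAddCommGroup X] [NormedSpace ℝ X]
    {g : (ℕ → ℝ) → X} {Dg Dg' : (ℕ →₀ ℕ) → (ℕ → ℝ) → X}
    (h : IsPDerivFamily g Dg) (h' : IsPDerivFamily g Dg') : Dg = Dg' := by
  funext ν
  obtain ⟨s, rfl⟩ := Multiset.toFinsupp.surjective ν
  induction s using Multiset.induction_on with
  | empty => rw [Multiset.toFinsupp_zero, h.1, h'.1]
  | cons a s ih =>
    funext y
    rw [Multiset.toFinsupp_cons]
    exact (h.2 _ a y).unique (ih ▸ h'.2 _ a y)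

theorem sq_integral_mul_le_mul_integral_mul_self {α : Type*} [MeasurableSpace α]
    {μ : Measure α} {f g : α → ℝ} (hff : Integrable (fun x => f x * f x) μ)
    (hfg : Integrable (fun x => f x * g x) μ) (hgg : Integrable (fun x => g x * g x) μ) :
    (∫ x, f x * g x ∂μ) ^ 2 ≤ (∫ x, f x * f x ∂μ) * ∫ x, g x * g x ∂μ := by
  have hquad : ∀ t : ℝ, 0 ≤ (∫ x, g x * g x ∂μ) * (t * t) + 2 * (∫ x, f x * g x ∂μ) * t +
      ∫ x, f x * f x ∂μ := by
    intro t
    have hexpand : ∫ x, (f x + t * g x) * (f x + t * g x) ∂μ =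
        (∫ x, f x * f x ∂μ) + (2 * t) * (∫ x, f x * g x ∂μ) + (t * t) * ∫ x, g x * g x ∂μ := by
      rw [← integral_const_mul, ← integral_const_mul, ← integral_add hff (hfg.const_mul _),
        ← integral_add (by exact hff.add (hfg.const_mul _)) (hgg.const_mul _)]
      congr 1 with x
      ring
    have := hexpand ▸ integral_nonneg fun x => mul_self_nonneg (f x + t * g x)
    linarith
  have := discrim_le_zero hquad
  rw [discrim] at this
  nlinarith

section IntegralMulForm

variable {Ω X : Type*} [MeasurableSpace Ω] [NormedAddCommGroup X] [NormedSpace ℝ X]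

noncomputable def integralMulForm (μ : Measure Ω) (φ : X →ₗ[ℝ] Ω → ℝ)
    (hφ : ∀ v w, Integrable (fun x => φ v x * φ w x) μ) : X →ₗ[ℝ] X →ₗ[ℝ] ℝ :=
  LinearMap.mk₂ ℝ (fun v w => ∫ x, φ v x * φ w x ∂μ)
    (fun v v' w => by
      simp only [map_add, Pi.add_apply, add_mul]
      exact integral_add (hφ v w) (hφ v' w))
    (fun c v w => by
      simp only [map_smul, Pi.smul_apply, smul_eq_mul, mul_assoc]
      exact integral_const_mul c _)
    (fun v w w' => by
      simp only [map_add, Pi.add_apply, mul_add]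
      exact integral_add (hφ v w) (hφ v w'))
    (fun c v w => by
      simp only [map_smul, Pi.smul_apply, smul_eq_mul, mul_left_comm]
      exact integral_const_mul c _)

theorem abs_integral_mul_le_of_poincare {μ : Measure Ω} {φ : X →ₗ[ℝ] Ω → ℝ}
    (hφ : ∀ v w, Integrable (fun x => φ v x * φ w x) μ) {C : ℝ}
    (hC : ∀ v, ∫ x, φ v x ^ 2 ∂μ ≤ C ^ 2 * ‖v‖ ^ 2) (v w : X) :
    |∫ x, φ v x * φ w x ∂μ| ≤ C ^ 2 * ‖v‖ * ‖w‖ := by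
  have hCv := hC v
  have hCw := hC w
  simp only [sq (φ _ _)] at hCv hCw
  have hsq : (∫ x, φ v x * φ w x ∂μ) ^ 2 ≤ (C ^ 2 * ‖v‖ * ‖w‖) ^ 2 :=
    calc _ ≤ (∫ x, φ v x * φ v x ∂μ) * ∫ x, φ w x * φ w x ∂μ :=
          sq_integral_mul_le_mul_integral_mul_self (hφ v v) (hφ v w) (hφ w w)
      _ ≤ (C ^ 2 * ‖v‖ ^ 2) * (C ^ 2 * ‖w‖ ^ 2) :=
          mul_le_mul hCv hCw (integral_nonneg fun x => mul_self_nonneg _) (by positivity)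
      _ = _ := by ring
  exact abs_le_of_sq_le_sq hsq (by positivity)

noncomputable def integralMulCLM (μ : Measure Ω) (φ : X →ₗ[ℝ] Ω → ℝ)
    (hφ : ∀ v w, Integrable (fun x => φ v x * φ w x) μ) (C : ℝ)
    (hC : ∀ v, ∫ x, φ v x ^ 2 ∂μ ≤ C ^ 2 * ‖v‖ ^ 2) : X →L[ℝ] X →L[ℝ] ℝ :=
  (integralMulForm μ φ hφ).mkContinuous₂ (C ^ 2) (abs_integral_mul_le_of_poincare hφ hC)

theorem norm_integralMulCLM_le {μ : Measure Ω} {φ : X →ₗ[ℝ] Ω → ℝ}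
    (hφ : ∀ v w, Integrable (fun x => φ v x * φ w x) μ) {C : ℝ}
    (hC : ∀ v, ∫ x, φ v x ^ 2 ∂μ ≤ C ^ 2 * ‖v‖ ^ 2) : ‖integralMulCLM μ φ hφ C hC‖ ≤ C ^ 2 :=
  LinearMap.mkContinuous₂_norm_le _ (sq_nonneg C) _

end IntegralMulForm

noncomputable def regularityBound (c a : ℝ) (b : ℕ → ℝ) (m : ℕ →₀ ℕ) : ℝ :=
  c / a ^ (m.degree + 1) * m.degree.factorial * ∏ j ∈ m.support, b j ^ m j

theorem regularityBound_mul_regularityBound {c d a : ℝ} {b : ℕ → ℝ} {m₁ m₂ ν : ℕ →₀ ℕ}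
    (h : m₁ + m₂ = ν) :
    regularityBound c a b m₁ * regularityBound d a b m₂ =
      c * d / a ^ (ν.degree + 2) * (m₁.degree.factorial * m₂.degree.factorial) *
        ∏ j ∈ ν.support, b j ^ ν j := by
  have hprod : (∏ j ∈ m₁.support, b j ^ m₁ j) * (∏ j ∈ m₂.support, b j ^ m₂ j) =
      ∏ j ∈ ν.support, b j ^ ν j := by
    rw [← h]
    exact (Finsupp.prod_add_index' (fun _ => pow_zero _) fun _ => pow_add _).symm
  simp only [regularityBound]
  rw [← hprod, ← h, map_add]
  ring

section Leibniz

variable {X Y Z : Type*} [NormedAddCommGroup X] [NormedSpace ℝ X]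
  [NormedAddCommGroup Y] [NormedSpace ℝ Y] [NormedAddCommGroup Z] [NormedSpace ℝ Z]

/-- The Leibniz formula `∂^ν B(u, v) = Σ_{m ≤ ν} (ν choose m) B(∂^m u, ∂^{ν-m} v)`, written as a
sum over the antidiagonal of the multiset of `ν`, which counts each `m` with multiplicity
`(ν choose m)`. -/
noncomputable def leibnizSum (B : X →L[ℝ] Y →L[ℝ] Z) (DU : (ℕ →₀ ℕ) → (ℕ → ℝ) → X)
    (DV : (ℕ →₀ ℕ) → (ℕ → ℝ) → Y) (ν : ℕ →₀ ℕ) (y : ℕ → ℝ) : Z :=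
  (ν.toMultiset.antidiagonal.map fun p =>
    B (DU (Multiset.toFinsupp p.1) y) (DV (Multiset.toFinsupp p.2) y)).sum

theorem IsPDerivFamily.leibniz {U : (ℕ → ℝ) → X} {V : (ℕ → ℝ) → Y}
    {DU : (ℕ →₀ ℕ) → (ℕ → ℝ) → X} {DV : (ℕ →₀ ℕ) → (ℕ → ℝ) → Y}
    (hU : IsPDerivFamily U DU) (hV : IsPDerivFamily V DV) (B : X →L[ℝ] Y →L[ℝ] Z) :
    IsPDerivFamily (fun y => B (U y) (V y)) (leibnizSum B DU DV) := by
  refine ⟨funext fun y => ?_, fun ν j y => ?_⟩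
  · simp [leibnizSum, hU.1, hV.1]
  · have hterm : ∀ p ∈ ν.toMultiset.antidiagonal, HasDerivAt
        (fun t => B (DU (Multiset.toFinsupp p.1) (Function.update y j t))
          (DV (Multiset.toFinsupp p.2) (Function.update y j t)))
        (B (DU (Multiset.toFinsupp p.1) y) (DV (Multiset.toFinsupp p.2 + Finsupp.single j 1) y) +
          B (DU (Multiset.toFinsupp p.1 + Finsupp.single j 1) y)
            (DV (Multiset.toFinsupp p.2) y)) (y j) := fun p _ => by
      simpa only [Function.update_eq_self] using
        B.hasDerivAt_of_bilinear (fun _ => hU.2 _ j y) (fun _ => hV.2 _ j y)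
    refine (hasDerivAt_multiset_sum hterm).congr_deriv ?_
    unfold leibnizSum
    rw [Finsupp.toMultiset_add_single, Multiset.antidiagonal_cons, Multiset.map_add,
      Multiset.sum_add, Multiset.map_map, Multiset.map_map, Multiset.sum_map_add]
    simp only [Function.comp_def, Prod.map_fst, Prod.map_snd, id, Multiset.toFinsupp_cons]


theorem norm_leibnizSum_le {B : X →L[ℝ] Y →L[ℝ] Z} {DU : (ℕ →₀ ℕ) → (ℕ → ℝ) → X}
    {DV : (ℕ →₀ ℕ) → (ℕ → ℝ) → Y} {C c d a : ℝ} {b : ℕ → ℝ} {y : ℕ → ℝ} (hB : ‖B‖ ≤ C)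
    (hU : ∀ m, ‖DU m y‖ ≤ regularityBound c a b m)
    (hV : ∀ m, ‖DV m y‖ ≤ regularityBound d a b m) (ν : ℕ →₀ ℕ) :
    ‖leibnizSum B DU DV ν y‖ ≤ C * (c * d) / a ^ (ν.degree + 2) *
      (ν.degree + 1).factorial * ∏ j ∈ ν.support, b j ^ ν j := by
  set s := ν.toMultiset
  set K := C * (c * d) / a ^ (ν.degree + 2) * ∏ j ∈ ν.support, b j ^ ν j
  have hdeg : ∀ t : Multiset ℕ, (Multiset.toFinsupp t).degree = Multiset.card t :=
    Multiset.toFinsupp_sum_eq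
  have hterm : ∀ p ∈ s.antidiagonal,
      ‖B (DU (Multiset.toFinsupp p.1) y) (DV (Multiset.toFinsupp p.2) y)‖ ≤
        K * ((Multiset.card p.1).factorial * (Multiset.card p.2).factorial : ℝ) := by
    rintro ⟨t₁, t₂⟩ hp
    have hsum : Multiset.toFinsupp t₁ + Multiset.toFinsupp t₂ = ν := by
      rw [← Multiset.toFinsupp_add, Multiset.mem_antidiagonal.mp hp,
        Finsupp.toMultiset_toFinsupp]
    calc _ ≤ C * regularityBound c a b (Multiset.toFinsupp t₁) *
          regularityBound d a b (Multiset.toFinsupp t₂) :=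
          B.le_of_opNorm₂_le_of_le hB (hU _) (hV _)
      _ = _ := by
        rw [mul_assoc, regularityBound_mul_regularityBound hsum, hdeg, hdeg]
        ring
  have hfact : (s.antidiagonal.map fun p =>
      ((Multiset.card p.1).factorial * (Multiset.card p.2).factorial : ℝ)).sum =
        (ν.degree + 1).factorial := by
    have := congrArg (Nat.cast : ℕ → ℝ) (Multiset.sum_antidiagonal_factorial_mul_factorial s)
    have hcard : Multiset.card s = ν.degree := Finsupp.card_toMultiset ν
    push_cast [Nat.cast_multiset_sum, Multiset.map_map, Function.comp_def, hcard] at this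
    exact this
  calc _ ≤ (s.antidiagonal.map fun p =>
        ‖B (DU (Multiset.toFinsupp p.1) y) (DV (Multiset.toFinsupp p.2) y)‖).sum :=
        (norm_multiset_sum_le _).trans_eq (by rw [Multiset.map_map]; rfl)
    _ ≤ (s.antidiagonal.map fun p =>
        K * ((Multiset.card p.1).factorial * (Multiset.card p.2).factorial : ℝ)).sum :=
      Multiset.sum_map_le_sum_map _ _ hterm
    _ = _ := by
      rw [Multiset.sum_map_mul_left, hfact]
      ring

end Leibniz

theorem nonlinear_qoi_regularity_general
    {Ω : Type*} [MeasurableSpace Ω] (μ : Measure Ω)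
    {X : Type*} [NormedAddCommGroup X] [NormedSpace ℝ X]
    (toFun : X →ₗ[ℝ] Ω → ℝ)
    (hint : ∀ v w : X, Integrable (fun x => toFun v x * toFun w x) μ)
    (CP : ℝ)
    (hPoincare : ∀ v : X, (∫ x, toFun v x ^ 2 ∂μ) ≤ CP ^ 2 * ‖v‖ ^ 2)
    (b : ℕ → ℝ)
    (amin : ℝ)
    (f : X →L[ℝ] ℝ) (U : (ℕ → ℝ) → X)
    (DU : (ℕ →₀ ℕ) → (ℕ → ℝ) → X) (hDU : IsPDerivFamily U DU)
    (hreg : ∀ ν : ℕ →₀ ℕ, ∀ y : ℕ → ℝ, (∀ j, y j ∈ Set.Icc (-1 : ℝ) 1) →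
      ‖DU ν y‖ ≤ ‖f‖ / amin ^ ((ν.sum fun _ n => n) + 1) *
        Nat.factorial (ν.sum fun _ n => n) * ∏ j ∈ ν.support, b j ^ ν j)
    (DF : (ℕ →₀ ℕ) → (ℕ → ℝ) → ℝ)
    (hDF : IsPDerivFamily (fun y => ∫ x, toFun (U y) x ^ 2 ∂μ) DF) :
    ∀ ν : ℕ →₀ ℕ, ∀ y : ℕ → ℝ, (∀ j, y j ∈ Set.Icc (-1 : ℝ) 1) →
      |DF ν y| ≤ CP ^ 2 * ‖f‖ ^ 2 / amin ^ ((ν.sum fun _ n => n) + 2) *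
        Nat.factorial ((ν.sum fun _ n => n) + 1) * ∏ j ∈ ν.support, b j ^ ν j := by
  intro ν y hy
  set B := integralMulCLM μ toFun hint CP hPoincare
  have hG : (fun y => ∫ x, toFun (U y) x ^ 2 ∂μ) = fun y => B (U y) (U y) := by
    simp only [sq]
    rfl
  have hDF_eq : DF = leibnizSum B DU DU := hDF.unique (hG ▸ hDU.leibniz hDU B)
  rw [hDF_eq, ← Real.norm_eq_abs, sq ‖f‖]
  exact norm_leibnizSum_le (norm_integralMulCLM_le hint hPoincare)
    (fun m => hreg m y hy) (fun m => hreg m y hy) ν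

/-- **Parametric regularity of the nonlinear quantity of interest `G_nl(v) = ∫_D v²`.**
The domain `D` is modelled by a measure space `(Ω, μ)`; `X` plays the role of
`H_0^1(D)`, with gradient `grad : X → (Ω → E)`, point evaluation `toFun : X → (Ω → ℝ)`,
norm `‖v‖_X² = ∫ ‖∇v‖²`, and Poincaré inequality `∫ v² ≤ C_P² ‖v‖_X²`. Let
`U y ∈ X` solve the weak problem `∫ a(·,y) ∇(U y)·∇v dμ = ⟨f,v⟩` for all `v`, with affine
coefficient `a(x,y) = a₀(x) + Σ_j y_j ψ_j(x)`, `0 < a_min ≤ a(x,y) ≤ a_max`, and suppose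
the solution satisfies the standard regularity bound
`‖∂^ν U(y)‖_X ≤ (‖f‖/a_min^{|ν|+1}) |ν|! ∏_j b_j^{ν_j}` on `[−1,1]^ℕ`, where
`b_j = ‖ψ_j‖_{L^∞}`. Then the derivatives of `y ↦ G_nl(U y)` satisfy
`|∂^ν G_nl(U y)| ≤ (C_P² ‖f‖² / a_min^{|ν|+2}) (|ν|+1)! ∏_j b_j^{ν_j}`. -/
theorem nonlinear_qoi_regularity
    {Ω : Type*} [MeasurableSpace Ω] (μ : Measure Ω)
    {E : Type*} [NormedAddCommGroup E] [InnerProductSpace ℝ E]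
    {X : Type*} [NormedAddCommGroup X] [NormedSpace ℝ X]
    (grad : X →ₗ[ℝ] Ω → E) (toFun : X →ₗ[ℝ] Ω → ℝ)
    (hXnorm : ∀ v : X, ‖v‖ ^ 2 = ∫ x, ‖grad v x‖ ^ 2 ∂μ)
    (hXint : ∀ v w : X, Integrable (fun x => (inner ℝ (grad v x) (grad w x) : ℝ)) μ)
    (hint : ∀ v w : X, Integrable (fun x => toFun v x * toFun w x) μ)
    (CP : ℝ) (hCP : 0 < CP)
    (hPoincare : ∀ v : X, (∫ x, toFun v x ^ 2 ∂μ) ≤ CP ^ 2 * ‖v‖ ^ 2)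
    (a₀ : Ω → ℝ) (ψ : ℕ → Ω → ℝ) (b : ℕ → ℝ) (hb0 : ∀ j, 0 ≤ b j)
    (hψb : ∀ j, ∀ᵐ x ∂μ, |ψ j x| ≤ b j) (hbsum : Summable b)
    (amin amax : ℝ) (hamin : 0 < amin)
    (hell : ∀ y : ℕ → ℝ, (∀ j, y j ∈ Set.Icc (-1 : ℝ) 1) →
      ∀ᵐ x ∂μ, amin ≤ a₀ x + ∑' j, y j * ψ j x ∧ a₀ x + ∑' j, y j * ψ j x ≤ amax)
    (f : X →L[ℝ] ℝ) (U : (ℕ → ℝ) → X)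
    (hweak : ∀ y : ℕ → ℝ, (∀ j, y j ∈ Set.Icc (-1 : ℝ) 1) → ∀ v : X,
      (∫ x, (a₀ x + ∑' j, y j * ψ j x) * (inner ℝ (grad (U y) x) (grad v x) : ℝ) ∂μ) = f v)
    (DU : (ℕ →₀ ℕ) → (ℕ → ℝ) → X) (hDU : IsPDerivFamily U DU)
    (hreg : ∀ ν : ℕ →₀ ℕ, ∀ y : ℕ → ℝ, (∀ j, y j ∈ Set.Icc (-1 : ℝ) 1) →
      ‖DU ν y‖ ≤ ‖f‖ / amin ^ ((ν.sum fun _ n => n) + 1) *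
        Nat.factorial (ν.sum fun _ n => n) * ∏ j ∈ ν.support, b j ^ ν j)
    (DF : (ℕ →₀ ℕ) → (ℕ → ℝ) → ℝ)
    (hDF : IsPDerivFamily (fun y => ∫ x, toFun (U y) x ^ 2 ∂μ) DF) :
    ∀ ν : ℕ →₀ ℕ, ∀ y : ℕ → ℝ, (∀ j, y j ∈ Set.Icc (-1 : ℝ) 1) →
      |DF ν y| ≤ CP ^ 2 * ‖f‖ ^ 2 / amin ^ ((ν.sum fun _ n => n) + 2) *
        Nat.factorial ((ν.sum fun _ n => n) + 1) * ∏ j ∈ ν.support, b j ^ ν j :=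
  nonlinear_qoi_regularity_general μ toFun hint CP hPoincare b amin f U DU hDU hreg DF hDF
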